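/- Let u ∈ ℂ be a primitive 10th root of unity and set a = u + u⁻¹. Then u⁴ + u²(1 − a) = −1. Moreover the matrix S̃ = [[1, 1 − a], [1 − a, −1]] satisfies S̃·S̃ = (3 − a)·I and det S̃ = −(3 − a) ≠ 0; in particular S̃ is invertible. Hence the ribbon category Fib_u satisfies the non-degeneracy (modularity) condition. -/

import Mathlib

/-!
For a primitive 10th root of unity `u` we have `u⁵ = -1` and `u ≠ -1`, so `u` is a root of
`(u⁵ + 1)/(u + 1) = u⁴ - u³ + u² - u + 1`. Since `u⁻¹ = -u⁴`, this relation says exactly that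
`a = u + u⁻¹` satisfies the golden-ratio equation `a² = a + 1`, and that the twist entry
`u⁴ + u²(1 - a)` equals `-1`. From `a² = a + 1` alone the S̃-matrix squares to `(3 - a) • 1`,
and `(3 - a)(a + 2) = 5` shows that `3 - a` is nonzero as soon as `5` is.
-/

namespace IsPrimitiveRoot

variable {K : Type*} [Field K] {u : K}

theorem pow_five_eq_neg_one (hu : IsPrimitiveRoot u 10) : u ^ 5 = -1 :=
  (hu.pow_of_dvd (p := 5) (by norm_num) (by norm_num)).eq_neg_one_of_two_right

theorem inv_eq_neg_pow_four (hu : IsPrimitiveRoot u 10) : u⁻¹ = -u ^ 4 :=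
  inv_eq_of_mul_eq_one_right <| by linear_combination -hu.pow_five_eq_neg_one

theorem pow_four_sub_pow_three_add_sq_sub_add_one_eq_zero (hu : IsPrimitiveRoot u 10) :
    u ^ 4 - u ^ 3 + u ^ 2 - u + 1 = 0 := by
  have hu1 : u + 1 ≠ 0 := fun h => by
    have hsq : u ^ 2 = 1 := by rw [eq_neg_of_add_eq_zero_left h]; ring
    exact hu.pow_ne_one_of_pos_of_lt (by norm_num) (by norm_num) hsq
  refine (mul_eq_zero.1 ?_).resolve_left hu1
  linear_combination hu.pow_five_eq_neg_one

theorem add_inv_sq_eq_add_inv_add_one (hu : IsPrimitiveRoot u 10) :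
    (u + u⁻¹) ^ 2 = u + u⁻¹ + 1 := by
  rw [hu.inv_eq_neg_pow_four]
  linear_combination hu.pow_four_sub_pow_three_add_sq_sub_add_one_eq_zero +
    (u ^ 3 - 2) * hu.pow_five_eq_neg_one

theorem pow_four_add_sq_mul_one_sub_add_inv (hu : IsPrimitiveRoot u 10) :
    u ^ 4 + u ^ 2 * (1 - (u + u⁻¹)) = -1 := by
  rw [hu.inv_eq_neg_pow_four]
  linear_combination hu.pow_four_sub_pow_three_add_sq_sub_add_one_eq_zero +
    u * hu.pow_five_eq_neg_one

end IsPrimitiveRoot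

/-- The S̃-matrix of Fib, indexed by the simple objects `I, X`, with `dim X = 1 - a`. -/
def fibonacciSMatrix {R : Type*} [CommRing R] (a : R) : Matrix (Fin 2) (Fin 2) R :=
  !![1, 1 - a; 1 - a, -1]

section GoldenRatio

variable {R : Type*} [CommRing R] {a : R}

theorem fibonacciSMatrix_mul_self (ha : a ^ 2 = a + 1) :
    fibonacciSMatrix a * fibonacciSMatrix a = (3 - a) • (1 : Matrix (Fin 2) (Fin 2) R) := by
  ext i j
  fin_cases i <;> fin_cases j <;>
    simp [fibonacciSMatrix, Matrix.mul_apply, Fin.sum_univ_two] <;>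
    linear_combination ha

theorem det_fibonacciSMatrix (ha : a ^ 2 = a + 1) : (fibonacciSMatrix a).det = -(3 - a) := by
  rw [fibonacciSMatrix, Matrix.det_fin_two_of]
  linear_combination -ha

theorem three_sub_ne_zero_of_sq_eq_add_one (ha : a ^ 2 = a + 1) (h5 : (5 : R) ≠ 0) :
    3 - a ≠ 0 := fun h => h5 <| by
  linear_combination (a + 2) * h + ha

theorem isUnit_fibonacciSMatrix {K : Type*} [Field K] {a : K} (ha : a ^ 2 = a + 1)
    (h5 : (5 : K) ≠ 0) : IsUnit (fibonacciSMatrix a) := by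
  rw [Matrix.isUnit_iff_isUnit_det, det_fibonacciSMatrix ha, isUnit_iff_ne_zero, neg_ne_zero]
  exact three_sub_ne_zero_of_sq_eq_add_one ha h5

end GoldenRatio

/-- The S̃-matrix of the Fibonacci ribbon category is non-degenerate, so Fib_u is modular. -/
theorem fibonacci_S_matrix_nondegenerate
    (u : ℂ) (hu : IsPrimitiveRoot u 10) (a : ℂ) (ha : a = u + u⁻¹) :
    u ^ 4 + u ^ 2 * (1 - a) = -1 ∧
    (!![1, 1 - a; 1 - a, -1] : Matrix (Fin 2) (Fin 2) ℂ) * !![1, 1 - a; 1 - a, -1] =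
      (3 - a) • (1 : Matrix (Fin 2) (Fin 2) ℂ) ∧
    (!![1, 1 - a; 1 - a, -1] : Matrix (Fin 2) (Fin 2) ℂ).det = -(3 - a) ∧
    -(3 - a) ≠ 0 ∧
    IsUnit (!![1, 1 - a; 1 - a, -1] : Matrix (Fin 2) (Fin 2) ℂ) := by
  subst ha
  have golden := hu.add_inv_sq_eq_add_inv_add_one
  have h5 : (5 : ℂ) ≠ 0 := by norm_num
  exact ⟨hu.pow_four_add_sq_mul_one_sub_add_inv, fibonacciSMatrix_mul_self golden,
    det_fibonacciSMatrix golden, neg_ne_zero.2 (three_sub_ne_zero_of_sq_eq_add_one golden h5),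
    isUnit_fibonacciSMatrix golden h5⟩
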